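/- If a form parameter Λ ≠ 0 for (D, σ, ε) is finite, then D is finite. -/

import Mathlib

/-!
Suppose `D` is infinite and pick `l ≠ 0` in `Λ`. The values `q(s) = σ(s) l s` lie in the
finite set `Λ`, hence so do those of the additive polar map
`g(s) = q(s + 1) - q(s) - q(1) = σ(s) l + l s`, whose kernel `K` therefore has finite index.
For `s, t ∈ K` one computes `g(s t) = l (s t + t s)`, so the anticommutator with `s` takes
finitely many values on `K`; its kernel in `K` is an infinite subgroup `M` of finite index, and
for `0 ≠ t₀ ∈ M` the finite-index subgroup `M t₀` commutes with `s`. A sub-division ring of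
finite additive index in an infinite division ring is everything, so `K` is central. Then
`σ = -1` on `K` and `q(s) = -l s²`, so `s ↦ s²` has finite image on the infinite central set
`K`, which is absurd since its fibres there have at most two elements.
-/

theorem AddSubgroup.finiteIndex_inf_ker {G G' : Type*} [AddGroup G] [AddGroup G']
    (K : AddSubgroup G) [K.FiniteIndex] (f : G →+ G') [Finite (K.map f)] :
    (K ⊓ f.ker).FiniteIndex := by
  refine ⟨?_⟩
  rw [← AddSubgroup.relIndex_mul_index inf_le_left, inf_comm, AddSubgroup.inf_relIndex_right,
    AddSubgroup.relIndex_ker]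
  exact mul_ne_zero Nat.card_pos.ne' AddSubgroup.FiniteIndex.index_ne_zero

theorem Set.Finite.of_image_mul_self {R : Type*} [Ring R] [NoZeroDivisors R] {S : Set R}
    (hS : S ⊆ Set.center R) (h : ((fun s => s * s) '' S).Finite) : S.Finite := by
  refine Set.Finite.of_finite_fibers _ h ?_
  rintro _ ⟨s, -, rfl⟩
  refine (Set.toFinite {s, -s}).subset fun t ⟨ht, hts⟩ => ?_
  have hcomm : Commute t s := ((Semigroup.mem_center_iff.mp (hS ht)) s).symm
  exact hcomm.mul_self_eq_mul_self_iff.mp hts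

theorem AddSubgroup.infinite_of_finiteIndex {G : Type*} [AddGroup G] [Infinite G]
    (H : AddSubgroup G) [H.FiniteIndex] : Infinite H := by
  refine not_finite_iff_infinite.mp fun _ => ?_
  have := (AddSubgroup.finite_iff_finite_and_finiteIndex H).mpr ⟨inferInstance, inferInstance⟩
  exact not_finite G

section DivisionRing

variable {D : Type*} [DivisionRing D]

def Subfield.centralizer (s : Set D) : Subfield D :=
  { Subring.centralizer s with inv_mem' := fun _ => Set.inv_mem_centralizer₀ }

theorem Subfield.mem_centralizer_iff {s : Set D} {x : D} :
    x ∈ Subfield.centralizer s ↔ ∀ m ∈ s, m * x = x * m :=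
  Iff.rfl

theorem Subfield.eq_top_of_finiteIndex [Infinite D] (S : Subfield D)
    [S.toAddSubgroup.FiniteIndex] : S = ⊤ := by
  have : Infinite S := S.toAddSubgroup.infinite_of_finiteIndex
  refine eq_top_iff.mpr fun v _ => ?_
  by_contra hv
  have hinj :
      Function.Injective fun c : S => (QuotientAddGroup.mk (v * c) : D ⧸ S.toAddSubgroup) := by
    intro a b hab
    by_contra hne
    have hab0 : (a - b : D) ≠ 0 := sub_ne_zero.mpr (Subtype.coe_injective.ne hne)
    have hvab : v * (a - b) ∈ S := by
      rw [mul_sub]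
      exact S.neg_mem_iff.mp (by simpa [neg_add_eq_sub] using QuotientAddGroup.eq.mp hab)
    exact hv (by simpa [hab0] using S.mul_mem hvab (S.inv_mem (S.sub_mem a.2 b.2)))
  have := Finite.of_injective _ hinj
  exact not_finite S

theorem mem_center_of_finite_anticommutators [Infinite D] (K : AddSubgroup D) [K.FiniteIndex]
    {s : D} (hfin : ((fun x => s * x + x * s) '' K).Finite) : s ∈ Set.center D := by
  let f : D →+ D := AddMonoidHom.mulLeft s + AddMonoidHom.mulRight s
  have : Finite (K.map f) := hfin.to_subtype
  let M := K ⊓ f.ker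
  have : M.FiniteIndex := K.finiteIndex_inf_ker f
  have : Infinite M := M.infinite_of_finiteIndex
  obtain ⟨⟨t₀, ht₀M⟩, ht₀⟩ := exists_ne (0 : M)
  replace ht₀ : t₀ ≠ 0 := fun h => ht₀ (Subtype.ext h)
  have anticomm : ∀ t ∈ M, t * s = -(s * t) := fun t ht =>
    eq_neg_of_add_eq_zero_right (AddMonoidHom.mem_ker.mp ht.2)
  have hle : M.map (AddMonoidHom.mulRight t₀) ≤ (Subfield.centralizer {s}).toAddSubgroup := by
    rintro _ ⟨t, ht, rfl⟩
    refine Subfield.mem_centralizer_iff.mpr fun m hm => ?_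
    rw [Set.mem_singleton_iff.mp hm, AddMonoidHom.coe_mulRight]
    calc s * (t * t₀) = -(t * s) * t₀ := by rw [anticomm t ht, neg_neg, mul_assoc]
      _ = t * -(s * t₀) := by rw [neg_mul, mul_neg, mul_assoc]
      _ = t * t₀ * s := by rw [← anticomm t₀ ht₀M, mul_assoc]
  have : (M.map (AddMonoidHom.mulRight t₀)).FiniteIndex :=
    ⟨by rw [AddSubgroup.index_map_of_bijective (mulRight_bijective₀ t₀ ht₀)]
        exact AddSubgroup.FiniteIndex.index_ne_zero⟩
  have := AddSubgroup.finiteIndex_of_le hle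
  have htop := (Subfield.centralizer {s}).eq_top_of_finiteIndex
  refine Semigroup.mem_center_iff.mpr fun x => ?_
  have hx : x ∈ Subfield.centralizer {s} := htop ▸ Subfield.mem_top x
  exact (Subfield.mem_centralizer_iff.mp hx s rfl).symm

theorem finite_of_twisted_squares_mem {σ : D →+ D} (hσ_mul : ∀ a b, σ (a * b) = σ b * σ a)
    (hσ_one : σ 1 = 1) {l : D} (hl : l ≠ 0) {Λ : AddSubgroup D} (hΛ : (Λ : Set D).Finite)
    (hq : ∀ s, σ s * l * s ∈ Λ) : Finite D := by
  by_contra hD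
  have : Infinite D := not_finite_iff_infinite.mp hD
  let g : D →+ D := (AddMonoidHom.mulRight l).comp σ + AddMonoidHom.mulLeft l
  have hg : ∀ s, g s = σ s * l + l * s := fun s => rfl
  have hgΛ : ∀ s, g s ∈ Λ := fun s => by
    have polar : g s = σ (s + 1) * l * (s + 1) - σ s * l * s - σ 1 * l * 1 := by
      rw [hg, map_add, hσ_one]; noncomm_ring
    exact polar ▸ Λ.sub_mem (Λ.sub_mem (hq _) (hq _)) (hq _)
  have : Finite g.range := (hΛ.subset (by rintro _ ⟨s, rfl⟩; exact hgΛ s)).to_subtype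
  let K := g.ker
  have hK : ∀ s ∈ K, σ s * l = -(l * s) := fun s hs =>
    eq_neg_of_add_eq_zero_left (AddMonoidHom.mem_ker.mp hs)
  have hcentral : ∀ s ∈ K, s ∈ Set.center D := by
    intro s hs
    refine mem_center_of_finite_anticommutators K <|
      (hΛ.preimage (mul_right_injective₀ hl).injOn).subset ?_
    rintro _ ⟨t, ht, rfl⟩
    show l * (s * t + t * s) ∈ Λ
    have : l * (s * t + t * s) = g (s * t) := by
      rw [hg, hσ_mul, mul_assoc, hK s hs, mul_neg, ← mul_assoc, hK t ht]; noncomm_ring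
    exact this ▸ hgΛ (s * t)
  have hsq : ∀ s ∈ K, -(l * (s * s)) ∈ Λ := by
    intro s hs
    have hcomm : s * l = l * s := (Semigroup.mem_center_iff.mp (hcentral s hs) l).symm
    have hσs : σ s = -s := mul_right_cancel₀ hl (by rw [hK s hs, neg_mul, hcomm])
    simpa [hσs, hcomm, mul_assoc] using hq s
  have hKfin : (K : Set D).Finite := Set.Finite.of_image_mul_self hcentral <|
    (hΛ.preimage (neg_injective.comp (mul_right_injective₀ hl)).injOn).subset
      (by rintro _ ⟨s, hs, rfl⟩; exact hsq s hs)
  exact Set.infinite_coe_iff.mp K.infinite_of_finiteIndex hKfin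

end DivisionRing

theorem finite_of_finite_form_parameter_general {D : Type*} [DivisionRing D]
    (σ : D → D) (Λ : AddSubgroup D)
    (hσbij : Function.Bijective σ)
    (hadd : ∀ a b : D, σ (a + b) = σ a + σ b)
    (hanti : ∀ a b : D, σ (a * b) = σ b * σ a)
    (hstab : ∀ s : D, ∀ x ∈ Λ, σ s * x * s ∈ Λ)
    (hΛne : Λ ≠ ⊥)
    (hΛfin : (Λ : Set D).Finite) :
    Finite D := by
  let τ : D →+ D := AddMonoidHom.mk' σ hadd
  have hτ_one : τ 1 = 1 := by
    have hne : τ 1 ≠ 0 := fun h => one_ne_zero (hσbij.injective (h.trans τ.map_zero.symm))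
    have hidem : IsIdempotentElem (τ 1) := by
      simp only [IsIdempotentElem, τ, AddMonoidHom.mk'_apply, ← hanti, mul_one]
    exact (IsIdempotentElem.iff_eq_zero_or_one.mp hidem).resolve_left hne
  obtain ⟨l, hlΛ, hl⟩ := Λ.bot_or_exists_ne_zero.resolve_left hΛne
  exact finite_of_twisted_squares_mem hanti hτ_one hl hΛfin fun s => hstab s l hlΛ

/-- If a nonzero form parameter `Λ` for `(D, σ, ε)` is finite, then the
division ring `D` is finite. Here `σ` is an anti-automorphism of `D`,
`ε^σ·ε = 1`, `a^{σ²} = ε·a·ε⁻¹`, and the form parameter `Λ` is an additive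
subgroup with `D_{σ,-ε} = {c - c^σ ε} ⊆ Λ ⊆ D^{σ,-ε} = {c : c^σ ε = -c}`
and `s^σ·Λ·s ⊆ Λ` for all `s ∈ D`. -/
theorem finite_of_finite_form_parameter {D : Type*} [DivisionRing D]
    (σ : D → D) (ε : D) (Λ : AddSubgroup D)
    (hσbij : Function.Bijective σ)
    (hadd : ∀ a b : D, σ (a + b) = σ a + σ b)
    (hanti : ∀ a b : D, σ (a * b) = σ b * σ a)
    (hε : σ ε * ε = 1)
    (hsq : ∀ a : D, σ (σ a) = ε * a * ε⁻¹)
    (hlow : ∀ c : D, c - σ c * ε ∈ Λ)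
    (hup : ∀ x ∈ Λ, σ x * ε = -x)
    (hstab : ∀ s : D, ∀ x ∈ Λ, σ s * x * s ∈ Λ)
    (hΛne : Λ ≠ ⊥)
    (hΛfin : (Λ : Set D).Finite) :
    Finite D :=
  finite_of_finite_form_parameter_general σ Λ hσbij hadd hanti hstab hΛne hΛfin
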